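/- Let α > 0, β > -1, and for n ≥ 1 set A_n² = ((2n+α+β)/(2n+α+β+1))·((n+α)/(n+α+β)) and B_n² = ((2n+α+β)/(2n+α+β+1))·((n+β)/n). Then the sequences (n+α)/((n+(α+β+1)/2) A_n) and (n+β)/((n+(α+β+1)/2) B_n) are bounded above by an absolute constant independent of n, α and β (for α, β > -1/2, β ≥ 0 respectively as needed for positivity). -/

import Mathlib

/-! With `s = 2n + α + β`, both quotients have the shape `x / ((s + 1)/2 · √(s/(s + 1) · x/y))`
with `0 < x, y ≤ s`; its square is `4xy / (s(s + 1)) ≤ 4`, so `C = 2` works. -/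

open Real

lemma div_half_succ_mul_sqrt_le_two {x y s : ℝ} (hx : 0 < x) (hy : 0 < y) (hxs : x ≤ s)
    (hys : y ≤ s) : x / ((s + 1) / 2 * √(s / (s + 1) * (x / y))) ≤ 2 := by
  have hs : 0 < s := hx.trans_le hxs
  have hs1 : 0 < s + 1 := by linarith
  have hsq : (x / (s + 1)) ^ 2 ≤ s / (s + 1) * (x / y) := by
    rw [div_pow, div_mul_div_comm, div_le_div_iff₀ (by positivity) (by positivity)]
    have hxy : x * y ≤ s * (s + 1) := by nlinarith
    nlinarith [mul_le_mul_of_nonneg_left hxy (by positivity : (0 : ℝ) ≤ x * (s + 1))]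
  have hsqrt : x / (s + 1) ≤ √(s / (s + 1) * (x / y)) := Real.le_sqrt_of_sq_le hsq
  rw [div_le_iff₀ (by positivity)]
  calc x = (s + 1) * (x / (s + 1)) := by field_simp
    _ ≤ (s + 1) * √(s / (s + 1) * (x / y)) := by gcongr
    _ = 2 * ((s + 1) / 2 * √(s / (s + 1) * (x / y))) := by ring

theorem stmt_19 :
    ∃ C : ℝ, 0 < C ∧ ∀ (n : ℕ) (α β : ℝ), 1 ≤ n → 0 < α → 0 < (n : ℝ) + β →
      ((n : ℝ) + α) / (((n : ℝ) + (α + β + 1)/2) *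
          Real.sqrt (((2*(n:ℝ)+α+β)/(2*(n:ℝ)+α+β+1)) * (((n:ℝ)+α)/((n:ℝ)+α+β)))) ≤ C ∧
      ((n : ℝ) + β) / (((n : ℝ) + (α + β + 1)/2) *
          Real.sqrt (((2*(n:ℝ)+α+β)/(2*(n:ℝ)+α+β+1)) * (((n:ℝ)+β)/(n:ℝ)))) ≤ C := by
  refine ⟨2, two_pos, fun n α β hn hα hβ => ?_⟩
  have hn0 : (0 : ℝ) < n := by exact_mod_cast hn
  have hD : (n : ℝ) + (α + β + 1) / 2 = (2 * n + α + β + 1) / 2 := by ring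
  rw [hD]
  exact ⟨div_half_succ_mul_sqrt_le_two (by linarith) (by linarith) (by linarith) (by linarith),
    div_half_succ_mul_sqrt_le_two hβ hn0 (by linarith) (by linarith)⟩
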